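/- Every involution τ in PL⁻(S¹), the set of orientation-reversing piecewise linear homeomorphisms of the circle, is conjugate in PL(S¹) to the reflection s : z ↦ z̄. -/

import Mathlib

open Set Real Filter

/-- A function `ℝ → ℝ` is piecewise linear: its set of break points is locally
finite, and off the break points the function is locally affine. -/
def IsPLFun (f : ℝ → ℝ) : Prop :=
  ∃ B : Set ℝ, (∀ r : ℝ, (B ∩ Set.Icc (-r) r).Finite) ∧
    ∀ x ∉ B, ∃ a b : ℝ, ∀ᶠ y in nhds x, f y = a * y + b

/-- `F : ℝ → ℝ` is a lift of the circle map `f` with degree `k`. -/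
def IsLift (f : Circle → Circle) (F : ℝ → ℝ) (k : ℝ) : Prop :=
  (∀ x : ℝ, f (Circle.exp (2 * π * x)) = Circle.exp (2 * π * F x)) ∧
    ∀ x : ℝ, F (x + 1) = F x + k

/-- orientation-preserving piecewise linear homeomorphism of the circle -/
def PLplus (f : Circle ≃ₜ Circle) : Prop :=
  ∃ F : ℝ → ℝ, StrictMono F ∧ IsPLFun F ∧ IsLift f F 1

/-- orientation-reversing piecewise linear homeomorphism of the circle -/
def PLminus (f : Circle ≃ₜ Circle) : Prop :=
  ∃ F : ℝ → ℝ, StrictAnti F ∧ IsPLFun F ∧ IsLift f F (-1)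

/-- piecewise linear homeomorphism of the circle -/
def PLcirc (f : Circle ≃ₜ Circle) : Prop := PLplus f ∨ PLminus f

/-!
A lift `F` of `τ` is strictly decreasing and, since `τ` is onto, surjective; hence `F` is
continuous. As `τ` is an involution, `F ∘ F - id` is continuous and integer-valued, so it is a
constant `c`, and computing `F (F (F x))` in two ways gives `c = 0`. The map
`Ψ x = (x - F x) / 2` is then a strictly increasing PL map with `Ψ (x + 1) = Ψ x + 1` and
`Ψ ∘ F = -Ψ`. So `Ψ⁻¹` descends to a PL homeomorphism `φ` of the circle with
`τ ∘ φ = φ ∘ (z ↦ z⁻¹)`.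
-/

open Topology Function

lemma exp_two_pi_mul_eq_iff {x y : ℝ} :
    Circle.exp (2 * π * x) = Circle.exp (2 * π * y) ↔ ∃ m : ℤ, x = y + m := by
  rw [Circle.exp_eq_exp]
  refine exists_congr fun m => ⟨fun h => ?_, fun h => by rw [h]; ring⟩
  exact mul_left_cancel₀ (by positivity : 2 * π ≠ 0) (by rw [h]; ring)

lemma exists_exp_two_pi_mul_eq (z : Circle) : ∃ x : ℝ, Circle.exp (2 * π * x) = z := by
  obtain ⟨θ, rfl⟩ := Circle.exp_surjective z
  exact ⟨θ / (2 * π), by rw [mul_div_cancel₀ _ (by positivity)]⟩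

lemma add_intCast_of_add_one {F : ℝ → ℝ} {k : ℝ} (h : ∀ x, F (x + 1) = F x + k)
    (x : ℝ) (n : ℤ) : F (x + n) = F x + n * k := by
  have hper : Periodic (fun x => F x - k * x) 1 := fun x => by simp only [h]; ring
  have := hper.int_mul n x
  simp only [mul_one] at this
  linear_combination this

lemma Continuous.surjective_of_add_one {g : ℝ → ℝ} (hg : Continuous g)
    (h : ∀ x, g (x + 1) = g x + 1) : Surjective g := by
  intro y
  obtain ⟨n, hn⟩ := exists_int_gt |y - g 0|
  have hpos := add_intCast_of_add_one h 0 n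
  have hneg := add_intCast_of_add_one h 0 (-n)
  simp only [zero_add, mul_one, Int.cast_neg] at hpos hneg
  obtain ⟨hlo, hhi⟩ := abs_lt.1 hn
  exact intermediate_value_univ (-(n : ℝ)) n hg ⟨by linarith, by linarith⟩

theorem Antitone.continuous_of_surjective {α β : Type*} [LinearOrder α] [TopologicalSpace α]
    [OrderTopology α] [LinearOrder β] [TopologicalSpace β] [OrderTopology β] [DenselyOrdered β]
    {f : α → β} (hf : Antitone f) (hs : Surjective f) : Continuous f :=
  Monotone.continuous_of_surjective (β := βᵒᵈ) hf hs

section PiecewiseLinear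

variable {f g : ℝ → ℝ}

lemma isPLFun_id : IsPLFun fun x => x :=
  ⟨∅, fun r => by simp, fun _ _ => ⟨1, 0, Eventually.of_forall fun y => by ring⟩⟩

lemma IsPLFun.sub (hf : IsPLFun f) (hg : IsPLFun g) : IsPLFun fun x => f x - g x := by
  obtain ⟨Bf, hBf, hf⟩ := hf
  obtain ⟨Bg, hBg, hg⟩ := hg
  refine ⟨Bf ∪ Bg, fun r => ?_, fun x hx => ?_⟩
  · rw [union_inter_distrib_right]
    exact (hBf r).union (hBg r)
  obtain ⟨a, b, hab⟩ := hf x fun h => hx (Or.inl h)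
  obtain ⟨c, d, hcd⟩ := hg x fun h => hx (Or.inr h)
  exact ⟨a - c, b - d, by filter_upwards [hab, hcd] with y h₁ h₂; rw [h₁, h₂]; ring⟩

lemma IsPLFun.div_const (hf : IsPLFun f) (c : ℝ) : IsPLFun fun x => f x / c := by
  obtain ⟨B, hB, hf⟩ := hf
  refine ⟨B, hB, fun x hx => ?_⟩
  obtain ⟨a, b, hab⟩ := hf x hx
  exact ⟨a / c, b / c, by filter_upwards [hab] with y hy; rw [hy]; ring⟩

lemma finite_inter_Icc_of_finite_inter_Icc_neg {B : Set ℝ}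
    (hB : ∀ r : ℝ, (B ∩ Icc (-r) r).Finite) (p q : ℝ) : (B ∩ Icc p q).Finite :=
  (hB (|p| + |q|)).subset <| inter_subset_inter_right _ <| Icc_subset_Icc
    (by linarith [neg_abs_le p, abs_nonneg q]) (by linarith [le_abs_self q, abs_nonneg p])

lemma OrderIso.isPLFun_symm (e : ℝ ≃o ℝ) (he : IsPLFun e) : IsPLFun e.symm := by
  obtain ⟨B, hB, haff⟩ := he
  refine ⟨e '' B, fun r => ?_, fun x hx => ?_⟩
  · have : e '' B ∩ Icc (-r) r = e '' (B ∩ Icc (e.symm (-r)) (e.symm r)) := by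
      rw [image_inter e.injective, e.image_Icc, e.apply_symm_apply, e.apply_symm_apply]
    rw [this]
    exact (finite_inter_Icc_of_finite_inter_Icc_neg hB _ _).image e
  obtain ⟨a, b, hab⟩ := haff (e.symm x) fun h => hx ⟨_, h, e.apply_symm_apply x⟩
  have ha : a ≠ 0 := by
    rintro rfl
    obtain ⟨y, hy, hxy⟩ :=
      ((hab.filter_mono nhdsWithin_le_nhds).and (self_mem_nhdsWithin (s := Ioi (e.symm x)))).exists
    have := e.strictMono hxy
    rw [hy, hab.self_of_nhds, zero_mul, zero_mul] at this
    exact lt_irrefl _ this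
  refine ⟨a⁻¹, -b / a, ?_⟩
  filter_upwards [(e.symm.continuous.tendsto x).eventually hab] with w hw
  rw [e.apply_symm_apply] at hw
  field_simp
  linarith

end PiecewiseLinear

section Lift

variable {f : Circle → Circle} {F : ℝ → ℝ}

lemma IsLift.surjective (hF : IsLift f F (-1)) (hf : Surjective f) : Surjective F := by
  intro r
  obtain ⟨z, hz⟩ := hf (Circle.exp (2 * π * r))
  obtain ⟨x, rfl⟩ := exists_exp_two_pi_mul_eq z
  rw [hF.1] at hz
  obtain ⟨m, hm⟩ := exp_two_pi_mul_eq_iff.1 hz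
  exact ⟨x + m, by rw [add_intCast_of_add_one hF.2, hm]; ring⟩

lemma IsLift.involutive (hF : IsLift f F (-1)) (hcont : Continuous F)
    (hff : ∀ z, f (f z) = z) :
    Involutive F := by
  have hint : ∀ x, F (F x) - x ∈ range ((↑) : ℤ → ℝ) := fun x => by
    obtain ⟨m, hm⟩ := (exp_two_pi_mul_eq_iff (x := F (F x)) (y := x)).1
      (by rw [← hF.1, ← hF.1, hff])
    exact ⟨m, by rw [hm]; ring⟩
  obtain ⟨c, hc⟩ := hint 0
  have hconst : ∀ x, F (F x) = x + c := fun x => by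
    have := isPreconnected_univ.constant_of_mapsTo
      Int.isClosedEmbedding_coe_real.isInducing.isDiscrete_range
      ((hcont.comp hcont).sub continuous_id).continuousOn (fun x _ => hint x)
      (mem_univ x) (mem_univ 0)
    simp only [Pi.sub_apply, comp_apply, id_eq, sub_zero] at this
    linarith
  -- `F (F (F 0))` is both `F 0 + c` and `F (0 + c) = F 0 - c`
  have h3 := hconst (F 0)
  rw [hconst 0, add_intCast_of_add_one hF.2] at h3
  have hc_zero : (c : ℝ) = 0 := by linarith
  intro x
  rw [hconst x, hc_zero, add_zero]

end Lift

section HalfDisplacement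

variable {F : ℝ → ℝ}

noncomputable def halfDisplacement (F : ℝ → ℝ) (x : ℝ) : ℝ := (x - F x) / 2

lemma StrictAnti.strictMono_halfDisplacement (hF : StrictAnti F) :
    StrictMono (halfDisplacement F) := fun x y hxy => by
  unfold halfDisplacement
  linarith [hF hxy]

lemma halfDisplacement_add_one (hF : ∀ x, F (x + 1) = F x + -1) (x : ℝ) :
    halfDisplacement F (x + 1) = halfDisplacement F x + 1 := by
  unfold halfDisplacement
  rw [hF]
  ring

lemma Function.Involutive.semiconj_halfDisplacement (hF : Involutive F) :
    Semiconj (halfDisplacement F) F Neg.neg := fun x => by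
  unfold halfDisplacement
  rw [hF x]
  ring

lemma IsPLFun.halfDisplacement (hF : IsPLFun F) : IsPLFun (halfDisplacement F) :=
  (isPLFun_id.sub hF).div_const 2

lemma Continuous.halfDisplacement (hF : Continuous F) : Continuous (halfDisplacement F) := by
  unfold _root_.halfDisplacement
  fun_prop

end HalfDisplacement

section CircleMap

noncomputable def circleCover : C(ℝ, Circle) :=
  ⟨fun x => Circle.exp (2 * π * x), by fun_prop⟩

lemma isQuotientMap_circleCover : IsQuotientMap circleCover :=
  IsOpenMap.isQuotientMap
    (isLocalHomeomorph_circleExp.isOpenMap.comp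
      (Homeomorph.mulLeft₀ (2 * π) (by positivity)).isOpenMap)
    circleCover.continuous exists_exp_two_pi_mul_eq

lemma factorsThrough_circleCover {g : ℝ → ℝ} (hg : Continuous g)
    (h : ∀ x, g (x + 1) = g x + 1) : FactorsThrough (circleCover.comp ⟨g, hg⟩) circleCover :=
  fun x y hxy => by
    obtain ⟨m, hm⟩ := exp_two_pi_mul_eq_iff.1 hxy
    show Circle.exp (2 * π * g x) = Circle.exp (2 * π * g y)
    rw [hm, add_intCast_of_add_one h, mul_one]
    exact exp_two_pi_mul_eq_iff.2 ⟨m, rfl⟩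

noncomputable def circleMapOfLift (g : ℝ → ℝ) (hg : Continuous g)
    (h : ∀ x, g (x + 1) = g x + 1) : C(Circle, Circle) :=
  isQuotientMap_circleCover.lift _ (factorsThrough_circleCover hg h)

lemma circleMapOfLift_exp (g : ℝ → ℝ) (hg : Continuous g) (h : ∀ x, g (x + 1) = g x + 1)
    (x : ℝ) : circleMapOfLift g hg h (Circle.exp (2 * π * x)) = Circle.exp (2 * π * g x) :=
  DFunLike.congr_fun (isQuotientMap_circleCover.lift_comp _ (factorsThrough_circleCover hg h)) x

lemma OrderIso.symm_add_one (e : ℝ ≃o ℝ) (h : ∀ x, e (x + 1) = e x + 1) (y : ℝ) :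
    e.symm (y + 1) = e.symm y + 1 := by
  rw [e.symm_apply_eq, h, e.apply_symm_apply]

noncomputable def circleHomeomorphOfLift (e : ℝ ≃o ℝ) (h : ∀ x, e (x + 1) = e x + 1) :
    Circle ≃ₜ Circle where
  toFun := circleMapOfLift e e.continuous h
  invFun := circleMapOfLift e.symm e.symm.continuous (e.symm_add_one h)
  left_inv z := by
    obtain ⟨x, rfl⟩ := exists_exp_two_pi_mul_eq z
    rw [circleMapOfLift_exp, circleMapOfLift_exp, e.symm_apply_apply]
  right_inv z := by
    obtain ⟨x, rfl⟩ := exists_exp_two_pi_mul_eq z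
    rw [circleMapOfLift_exp, circleMapOfLift_exp, e.apply_symm_apply]

lemma isLift_circleHomeomorphOfLift (e : ℝ ≃o ℝ) (h : ∀ x, e (x + 1) = e x + 1) :
    IsLift (circleHomeomorphOfLift e h) e 1 :=
  ⟨circleMapOfLift_exp e e.continuous h, h⟩

end CircleMap

/-- Every involution `τ` in `PL⁻(S¹)` is conjugate in `PL(S¹)` to the reflection
`s : z ↦ z̄` (on the circle, `z̄ = z⁻¹`). -/
theorem involution_PLminus_conjugate_to_reflection (τ : Circle ≃ₜ Circle)
    (hτ : PLminus τ) (hinv : ∀ z : Circle, τ (τ z) = z) :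
    ∃ φ : Circle ≃ₜ Circle, PLcirc φ ∧
      ∀ z : Circle, τ z = φ ((φ.symm z)⁻¹) := by
  obtain ⟨F, hanti, hPL, hlift⟩ := hτ
  have hcont : Continuous F :=
    hanti.antitone.continuous_of_surjective (hlift.surjective τ.surjective)
  have hinvol : Involutive F := hlift.involutive hcont hinv
  let Ψ : ℝ ≃o ℝ := hanti.strictMono_halfDisplacement.orderIsoOfSurjective _
    (hcont.halfDisplacement.surjective_of_add_one (halfDisplacement_add_one hlift.2))
  have hΦ : ∀ t, Ψ.symm (t + 1) = Ψ.symm t + 1 :=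
    Ψ.symm_add_one (halfDisplacement_add_one hlift.2)
  have hconj : Semiconj Ψ.symm Neg.neg F :=
    hinvol.semiconj_halfDisplacement.inverse_left Ψ.left_inv Ψ.right_inv
  let φ := circleHomeomorphOfLift Ψ.symm hΦ
  refine ⟨φ, Or.inl ⟨Ψ.symm, Ψ.symm.strictMono, Ψ.isPLFun_symm hPL.halfDisplacement,
    isLift_circleHomeomorphOfLift _ hΦ⟩, fun z => ?_⟩
  obtain ⟨t, ht⟩ := exists_exp_two_pi_mul_eq (φ.symm z)
  calc τ z = τ (φ (Circle.exp (2 * π * t))) := by rw [ht, φ.apply_symm_apply]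
    _ = φ (Circle.exp (2 * π * -t)) := by
      rw [(isLift_circleHomeomorphOfLift _ hΦ).1, hlift.1, (isLift_circleHomeomorphOfLift _ hΦ).1,
        hconj.eq]
    _ = φ ((φ.symm z)⁻¹) := by rw [mul_neg, Circle.exp_neg, ht]
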